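/- arXiv:2503.07537 — 2 statements merged into one kernel-verified Lean document; each statement's English description precedes it below -/
import Mathlib

section
/- Let n, m, N be positive integers with n ≤ m and 2n−1 ≤ N ≤ 2m, and consider the truncated averaged system dρ/dt = Λ(ρ,ψ,t), dψ/dt = Ω(ρ,ψ,t). Assume λ(ψ) ≠ 0 for all ψ ∈ ℝ, and ζ_{2n−1}(t) → ∞ as t → ∞. Fix constants 𝓡 > 0, r₀ with 0 < |r₀| < 𝓡, and ε ∈ (0, 𝓡), and define the domain 𝔇 = {(ρ,ψ) ∈ ℝ²: |ρ + r₀ μ(t₀)^{−1/2}| ≤ 𝓡 μ(t₀)^{−1/2} − ε}. Then there exists t₁ ≥ t₀ such that every solution of the system with (ρ(t₁), ψ(t₁)) in the interior of 𝔇 satisfies: |ρ(t) − ρ(t₁)| is strictly increasing for t > t₁ as long as (ρ(t),ψ(t)) ∈ 𝔇, and (ρ(t), ψ(t)) reaches the boundary of 𝔇 at some finite time t_e > t₁. -/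
open Real Filter Set intervalIntegral

set_option maxHeartbeats 1000000

lemma aux_sign_const {f : ℝ → ℝ} (hf : Continuous f) (h : ∀ x, f x ≠ 0) :
    ∃ σ : ℝ, (σ = 1 ∨ σ = -1) ∧ ∀ x, 0 < σ * f x := by
  rcases lt_or_gt_of_ne (h 0) with h0 | h0
  · refine ⟨-1, Or.inr rfl, fun x => ?_⟩
    rcases lt_or_gt_of_ne (h x) with hx | hx
    · nlinarith
    · exfalso
      have := intermediate_value_uIcc (f := f) (a := 0) (b := x) hf.continuousOn
      have h0m : (0:ℝ) ∈ uIcc (f 0) (f x) := by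
        rw [Set.mem_uIcc]; left; constructor <;> linarith
      obtain ⟨y, _, hy⟩ := this h0m
      exact h y hy
  · refine ⟨1, Or.inl rfl, fun x => ?_⟩
    rcases lt_or_gt_of_ne (h x) with hx | hx
    · exfalso
      have := intermediate_value_uIcc (f := f) (a := 0) (b := x) hf.continuousOn
      have h0m : (0:ℝ) ∈ uIcc (f 0) (f x) := by
        rw [Set.mem_uIcc]; right; constructor <;> linarith
      obtain ⟨y, _, hy⟩ := this h0m
      exact h y hy
    · nlinarith

lemma aux_periodic_min {f : ℝ → ℝ} (hf : Continuous f) (hper : Function.Periodic f (2 * π))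
    (hpos : ∀ x, 0 < f x) : ∃ lb > 0, ∀ x, lb ≤ f x := by
  obtain ⟨x₀, hx₀, hmin⟩ := (isCompact_Icc (a := (0:ℝ)) (b := 2 * π)).exists_isMinOn
    (nonempty_Icc.mpr (by positivity)) hf.continuousOn
  refine ⟨f x₀, hpos x₀, fun x => ?_⟩
  obtain ⟨y, hy, hxy⟩ := hper.exists_mem_Ico₀ Real.two_pi_pos x
  rw [hxy]
  exact hmin ⟨hy.1, hy.2.le⟩

lemma aux_finset_bound {s : Finset ℕ} {g : ℕ → ℝ → ℝ → ℝ} {B : ℝ}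
    (h : ∀ k ∈ s, ∃ M, ∀ x y : ℝ, |x| ≤ B → |g k x y| ≤ M) :
    ∃ M, 0 ≤ M ∧ ∀ k ∈ s, ∀ x y : ℝ, |x| ≤ B → |g k x y| ≤ M := by
  classical
  induction s using Finset.induction with
  | empty => exact ⟨0, le_refl 0, by simp⟩
  | @insert a s ha ih =>
    obtain ⟨M, hM0, hM⟩ := ih (fun k hk => h k (Finset.mem_insert_of_mem hk))
    obtain ⟨Ma, hMa⟩ := h a (Finset.mem_insert_self a s)
    refine ⟨max M Ma, le_max_of_le_left hM0, fun k hk x y hx => ?_⟩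
    rcases Finset.mem_insert.mp hk with rfl | hk
    · exact (hMa x y hx).trans (le_max_right _ _)
    · exact (hM k hk x y hx).trans (le_max_left _ _)

lemma aux_strip_bound {f : ℝ → ℝ → ℝ} (hf : Continuous fun p : ℝ × ℝ => f p.1 p.2)
    (hper : ∀ x y, f x (y + 2 * π) = f x y) (B : ℝ) :
    ∃ M, ∀ x y : ℝ, |x| ≤ B → |f x y| ≤ M := by
  obtain ⟨M, hM⟩ := (IsCompact.exists_bound_of_continuousOn
    ((isCompact_Icc (a := -B) (b := B)).prod (isCompact_Icc (a := (0:ℝ)) (b := 2 * π)))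
    hf.continuousOn)
  refine ⟨M, fun x y hx => ?_⟩
  have hpery : Function.Periodic (fun y => f x y) (2 * π) := fun y => hper x y
  obtain ⟨y', hy', hyy⟩ := hpery.exists_mem_Ico₀ Real.two_pi_pos y
  have := hM (x, y') ⟨abs_le.mp hx, hy'.1, hy'.2.le⟩
  simpa [hyy] using this


/-- Lemma 3 of the paper (phase drifting): if the leading averaged drift `λ(ψ)` never
vanishes and `ζ_{2n−1}(t) → ∞`, then there is `t₁ ≥ t₀` such that every solution of the
truncated averaged system starting at time `t₁` in the interior of the domain
`𝔇 = {(ρ,ψ) : |ρ + r₀ μ(t₀)^{−1/2}| ≤ 𝓡 μ(t₀)^{−1/2} − ε}` has `|ρ(t) − ρ(t₁)|` strictly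
increasing while the trajectory stays in `𝔇`, and reaches the boundary of `𝔇` in finite
time. -/
theorem truncated_system_phase_drifting
    -- the decaying factor μ and its logarithmic derivative ℓ = μ'/μ
    (t₀ : ℝ) (μ : ℝ → ℝ)
    (hμpos : ∀ t, t₀ ≤ t → 0 < μ t)
    (hμsmooth : ContDiffOn ℝ (⊤ : ℕ∞) μ (Ici t₀))
    (hμanti : StrictAntiOn μ (Ici t₀))
    (hμ0 : Tendsto μ atTop (nhds 0))
    (hℓ0 : Tendsto (fun t => deriv μ t / μ t) atTop (nhds 0))
    -- the integers n ≤ m and 2n−1 ≤ N ≤ 2m, and the limit χ_m ≤ 0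
    (n m N : ℕ) (hn : 1 ≤ n) (hnm : n ≤ m) (hN1 : 2 * n - 1 ≤ N) (hN2 : N ≤ 2 * m)
    (χm : ℝ) (hχm : χm ≤ 0)
    (hℓχ : Tendsto (fun t => deriv μ t / μ t / μ t ^ m) atTop (nhds χm))
    (hμℓ : Tendsto (fun t => μ t ^ (m + 1) / (deriv μ t / μ t)) atTop (nhds 0))
    -- the averaged coefficients Λ_k, Ω_k: smooth, 2π-periodic in ψ, polynomial in ρ
    (Λc Ωc : ℕ → ℝ → ℝ → ℝ)
    (hΛcsmooth : ∀ k, ContDiff ℝ (⊤ : ℕ∞) (fun p : ℝ × ℝ => Λc k p.1 p.2))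
    (hΩcsmooth : ∀ k, ContDiff ℝ (⊤ : ℕ∞) (fun p : ℝ × ℝ => Ωc k p.1 p.2))
    (hΛcper : ∀ k ρ ψ, Λc k ρ (ψ + 2 * π) = Λc k ρ ψ)
    (hΩcper : ∀ k ρ ψ, Ωc k ρ (ψ + 2 * π) = Ωc k ρ ψ)
    (hΛcpoly : ∀ k, ∃ c : ℕ → ℝ → ℝ, ∀ ρ ψ,
      Λc k ρ ψ = ∑ j ∈ Finset.range k, c j ψ * ρ ^ j)
    (hΩcpoly : ∀ k, ∃ c : ℕ → ℝ → ℝ, ∀ ρ ψ,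
      Ωc k ρ ψ = ∑ j ∈ Finset.range (k + 1), c j ψ * ρ ^ j)
    -- Ω₁(ρ,ψ) = ηρ with η ≠ 0; ∂_ψ Ω_k ≡ 0 for k ≤ 2n−1; Λ_{2n−1} = λ(ψ)
    (η : ℝ) (hη : η ≠ 0) (hΩ1 : ∀ ρ ψ, Ωc 1 ρ ψ = η * ρ)
    (hΩψ : ∀ k, k ≤ 2 * n - 1 → ∀ ρ ψ, deriv (fun ψ' => Ωc k ρ ψ') ψ = 0)
    (lam : ℝ → ℝ) (hlam : ∀ ρ ψ, Λc (2 * n - 1) ρ ψ = lam ψ)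
    -- the remainders Λ̃, Ω̃: of order O(μ^{(N+1)/2}) together with first derivatives,
    -- uniformly in ψ and in ρ from bounded sets
    (Λtil Ωtil : ℝ → ℝ → ℝ → ℝ)
    (hΛtil : ∀ B : ℝ, 0 < B → ∃ C > 0, ∃ T ≥ t₀, ∀ t ≥ T, ∀ ρ ψ : ℝ, |ρ| ≤ B →
      |Λtil ρ ψ t| ≤ C * μ t ^ (((N : ℝ) + 1) / 2) ∧
      |deriv (fun ρ' => Λtil ρ' ψ t) ρ| ≤ C * μ t ^ (((N : ℝ) + 1) / 2) ∧
      |deriv (fun ψ' => Λtil ρ ψ' t) ψ| ≤ C * μ t ^ (((N : ℝ) + 1) / 2))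
    (hΩtil : ∀ B : ℝ, 0 < B → ∃ C > 0, ∃ T ≥ t₀, ∀ t ≥ T, ∀ ρ ψ : ℝ, |ρ| ≤ B →
      |Ωtil ρ ψ t| ≤ C * μ t ^ (((N : ℝ) + 1) / 2) ∧
      |deriv (fun ρ' => Ωtil ρ' ψ t) ρ| ≤ C * μ t ^ (((N : ℝ) + 1) / 2) ∧
      |deriv (fun ψ' => Ωtil ρ ψ' t) ψ| ≤ C * μ t ^ (((N : ℝ) + 1) / 2))
    -- the full right-hand sides Λ, Ω of the truncated averaged system
    (Λ Ω : ℝ → ℝ → ℝ → ℝ)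
    (hΛ : ∀ ρ ψ t, Λ ρ ψ t =
      (∑ k ∈ Finset.Icc (2 * n - 1) N, Λc k ρ ψ * μ t ^ ((k : ℝ) / 2)) -
        deriv μ t / μ t * ρ / 2 + Λtil ρ ψ t)
    (hΩ : ∀ ρ ψ t, Ω ρ ψ t =
      (∑ k ∈ Finset.Icc 1 N, Ωc k ρ ψ * μ t ^ ((k : ℝ) / 2)) + Ωtil ρ ψ t)
    -- assumption (asnzero): λ(ψ) ≠ 0 for all ψ, and ζ_{2n−1}(t) → ∞
    (hlamne : ∀ ψ : ℝ, lam ψ ≠ 0)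
    (hζ : Tendsto (fun t => ∫ ς in t₀..t, μ ς ^ ((2 * (n : ℝ) - 1) / 2)) atTop atTop)
    -- the constants 𝓡, r₀, ε and the domain 𝔇
    (R r₀ ε : ℝ) (hR : 0 < R) (hr₀ne : r₀ ≠ 0) (hr₀R : |r₀| < R)
    (hε0 : 0 < ε) (hεR : ε < R)
    (D : Set (ℝ × ℝ))
    (hD : D = {p : ℝ × ℝ |
      |p.1 + r₀ * μ t₀ ^ (-(1 : ℝ) / 2)| ≤ R * μ t₀ ^ (-(1 : ℝ) / 2) - ε}) :
    ∃ t₁ : ℝ, t₀ ≤ t₁ ∧ ∀ ρ ψ : ℝ → ℝ,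
      (∀ t, t₁ ≤ t →
        HasDerivAt ρ (Λ (ρ t) (ψ t) t) t ∧ HasDerivAt ψ (Ω (ρ t) (ψ t) t) t) →
      (ρ t₁, ψ t₁) ∈ interior D →
      -- |ρ(t) − ρ(t₁)| is strictly increasing as long as the trajectory stays in 𝔇
      ((∀ s t : ℝ, t₁ ≤ s → s < t → (∀ τ ∈ Icc t₁ t, (ρ τ, ψ τ) ∈ D) →
          |ρ s - ρ t₁| < |ρ t - ρ t₁|) ∧
      -- the trajectory reaches the boundary of 𝔇 at a finite time t_e > t₁
        (∃ te : ℝ, t₁ < te ∧ (ρ te, ψ te) ∈ frontier D)) := by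
  classical
  -- basic setup
  have hcast : ((2 * n - 1 : ℕ) : ℝ) = 2 * (n : ℝ) - 1 := by
    rw [Nat.cast_sub (by omega)]; push_cast; ring
  obtain ⟨e0, he0⟩ : ∃ x : ℝ, x = (2 * (n : ℝ) - 1) / 2 := ⟨_, rfl⟩
  rw [← he0] at hζ
  have he0nonneg : 0 ≤ e0 := by
    have : (1:ℝ) ≤ (n:ℝ) := by exact_mod_cast hn
    rw [he0]; linarith
  -- sign and lower bound of lam
  have hlameq : lam = fun ψ => Λc (2 * n - 1) 0 ψ := by funext ψ; rw [hlam]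
  have hlamc : Continuous lam := by
    rw [hlameq]
    exact (hΛcsmooth (2 * n - 1)).continuous.comp (continuous_const.prodMk continuous_id)
  obtain ⟨σ, hσ, hσlam⟩ := aux_sign_const hlamc hlamne
  have hσabs : |σ| = 1 := by rcases hσ with rfl | rfl <;> simp
  have hσlamper : Function.Periodic (fun ψ => σ * lam ψ) (2 * π) := by
    intro ψ
    simp only [hlameq, hΛcper]
  obtain ⟨lb, hlb0, hlb⟩ := aux_periodic_min (continuous_const.mul hlamc) hσlamper hσlam
  -- domain constants
  have hμt₀ : 0 < μ t₀ := hμpos t₀ le_rfl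
  obtain ⟨μ0, hμ0def⟩ : ∃ x : ℝ, x = μ t₀ ^ (-(1 : ℝ) / 2) := ⟨_, rfl⟩
  have hμ0pos : 0 < μ0 := hμ0def ▸ Real.rpow_pos_of_pos hμt₀ _
  obtain ⟨c, hcdef⟩ : ∃ x : ℝ, x = r₀ * μ0 := ⟨_, rfl⟩
  obtain ⟨K, hKdef⟩ : ∃ x : ℝ, x = R * μ0 - ε := ⟨_, rfl⟩
  obtain ⟨B, hBdef⟩ : ∃ x : ℝ, x = (R + |r₀|) * μ0 := ⟨_, rfl⟩
  rw [← hμ0def, ← hcdef, ← hKdef] at hD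
  have hB : 0 < B := by
    rw [hBdef]
    have : 0 < R + |r₀| := by positivity
    positivity
  have hmemB : ∀ x : ℝ, |x + c| ≤ K → |x| ≤ B := by
    intro x hx
    have h1 : |x| ≤ |x + c| + |c| := by
      have := abs_sub_abs_le_abs_sub x (-c)
      have h2 : |(-c)| = |c| := abs_neg c
      have h3 : x - (-c) = x + c := by ring
      rw [h3, h2] at this
      linarith [abs_nonneg (x + c), abs_nonneg c]
    have h2 : |c| = |r₀| * μ0 := by
      rw [hcdef, abs_mul, abs_of_pos hμ0pos]
    rw [hBdef]
    rw [h2] at h1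
    have : K ≤ R * μ0 := by rw [hKdef]; linarith
    nlinarith
  -- description of the domain
  have hDeq : D = Icc (-c - K) (-c + K) ×ˢ (univ : Set ℝ) := by
    rw [hD]
    ext p
    simp only [Set.mem_setOf_eq, Set.mem_prod, Set.mem_Icc, Set.mem_univ, and_true, abs_le]
    constructor
    · rintro ⟨h1, h2⟩; constructor <;> linarith
    · rintro ⟨h1, h2⟩; constructor <;> linarith
  have hDclosed : IsClosed D := by rw [hDeq]; exact isClosed_Icc.prod isClosed_univ
  have hDint : interior D = Ioo (-c - K) (-c + K) ×ˢ (univ : Set ℝ) := by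
    rw [hDeq, interior_prod_eq, interior_Icc, interior_univ]
  have hmemBD : ∀ p : ℝ × ℝ, p ∈ D → |p.1| ≤ B := by
    intro p hp
    rw [hDeq] at hp
    exact hmemB p.1 (abs_le.mpr ⟨by linarith [hp.1.1], by linarith [hp.1.2]⟩)
  -- the key drift estimate
  have key : ∃ t₁ : ℝ, t₀ + 1 ≤ t₁ ∧ ∀ t, t₁ ≤ t → ∀ x y : ℝ, |x| ≤ B →
      lb / 2 * μ t ^ e0 ≤ σ * Λ x y t := by
    obtain ⟨C, hC, T, hTt₀, hΛt⟩ := hΛtil B hB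
    obtain ⟨M, hM0, hM⟩ := aux_finset_bound (s := Finset.Icc (2 * n - 1) N) (g := Λc) (B := B)
      (fun k _ => aux_strip_bound (hΛcsmooth k).continuous (hΛcper k) B)
    obtain ⟨C₂, hC₂⟩ : ∃ x : ℝ, x = ((N : ℝ) + 1) * M + B * (|χm| + 1) / 2 + C := ⟨_, rfl⟩
    have hC₂pos : 0 < C₂ := by
      rw [hC₂]
      have h1 : 0 ≤ ((N : ℝ) + 1) * M := by positivity
      have h2 : 0 ≤ B * (|χm| + 1) / 2 := by positivity
      linarith only [h1, h2, hC]
    obtain ⟨δ, hδdef⟩ : ∃ x : ℝ, x = min 1 ((lb / (2 * C₂)) ^ 2) := ⟨_, rfl⟩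
    have hδ : 0 < δ := by rw [hδdef]; exact lt_min one_pos (by positivity)
    have E1 : ∀ᶠ t in atTop, μ t < δ := hμ0.eventually (gt_mem_nhds hδ)
    have E2 : ∀ᶠ t in atTop, |deriv μ t / μ t / μ t ^ m| ≤ |χm| + 1 := by
      filter_upwards [hℓχ.eventually (Metric.ball_mem_nhds χm one_pos)] with t ht
      rw [Real.dist_eq] at ht
      have h9 := abs_sub_abs_le_abs_sub (deriv μ t / μ t / μ t ^ m) χm
      linarith only [h9, ht]
    rw [eventually_atTop] at E1 E2
    obtain ⟨T1, hT1⟩ := E1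
    obtain ⟨T2, hT2⟩ := E2
    refine ⟨max (max T1 T2) (max T (t₀ + 1)), le_trans (le_max_right T (t₀+1)) (le_max_right _ _),
      fun t ht x y hx => ?_⟩
    have htT1 : T1 ≤ t := le_trans (le_trans (le_max_left T1 T2) (le_max_left _ _)) ht
    have htT2 : T2 ≤ t := le_trans (le_trans (le_max_right T1 T2) (le_max_left _ _)) ht
    have htT : T ≤ t := le_trans (le_trans (le_max_left T (t₀+1)) (le_max_right _ _)) ht
    have htt₀ : t₀ + 1 ≤ t := le_trans (le_trans (le_max_right T (t₀+1)) (le_max_right _ _)) ht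
    have hμt : 0 < μ t := hμpos t (by linarith)
    have hμ1 : μ t ≤ 1 := le_of_lt (lt_of_lt_of_le (hT1 t htT1) (hδdef ▸ min_le_left _ _))
    have hμδ2 : μ t ≤ (lb / (2 * C₂)) ^ 2 :=
      le_of_lt (lt_of_lt_of_le (hT1 t htT1) (hδdef ▸ min_le_right _ _))
    -- abbreviations
    have hP : 0 < μ t ^ e0 := Real.rpow_pos_of_pos hμt _
    have hhalf : 0 < μ t ^ (1/2 : ℝ) := Real.rpow_pos_of_pos hμt _
    have hun : μ t ^ ((n : ℝ)) = μ t ^ e0 * μ t ^ (1/2 : ℝ) := by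
      rw [← Real.rpow_add hμt]; congr 1; rw [he0]; ring
    -- split the sum
    have hmem : (2 * n - 1) ∈ Finset.Icc (2 * n - 1) N := Finset.mem_Icc.mpr ⟨le_rfl, hN1⟩
    have hsplit : (∑ k ∈ Finset.Icc (2 * n - 1) N, Λc k x y * μ t ^ ((k : ℝ) / 2))
        = lam y * μ t ^ e0
          + ∑ k ∈ (Finset.Icc (2 * n - 1) N).erase (2 * n - 1), Λc k x y * μ t ^ ((k : ℝ) / 2) := by
      rw [← Finset.add_sum_erase _ _ hmem, hlam, hcast, he0]
    -- bound on the remaining sum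
    have hS : |∑ k ∈ (Finset.Icc (2 * n - 1) N).erase (2 * n - 1), Λc k x y * μ t ^ ((k : ℝ) / 2)|
        ≤ ((N : ℝ) + 1) * M * (μ t ^ e0 * μ t ^ (1/2 : ℝ)) := by
      calc |∑ k ∈ (Finset.Icc (2 * n - 1) N).erase (2 * n - 1), Λc k x y * μ t ^ ((k : ℝ) / 2)|
          ≤ ∑ k ∈ (Finset.Icc (2 * n - 1) N).erase (2 * n - 1), |Λc k x y * μ t ^ ((k : ℝ) / 2)| :=
            Finset.abs_sum_le_sum_abs _ _
        _ ≤ ∑ k ∈ (Finset.Icc (2 * n - 1) N).erase (2 * n - 1),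
              M * (μ t ^ e0 * μ t ^ (1/2 : ℝ)) := by
            apply Finset.sum_le_sum
            intro k hk
            have hk1 := Finset.mem_of_mem_erase hk
            have hk2 : 2 * n ≤ k := by
              have := (Finset.mem_Icc.mp hk1).1
              have := Finset.ne_of_mem_erase hk
              omega
            have hexp : (n : ℝ) ≤ (k : ℝ) / 2 := by
              have h9 : ((2 * n : ℕ) : ℝ) ≤ (k : ℝ) := by exact_mod_cast hk2
              push_cast at h9
              linarith only [h9]
            have hpowpos : 0 < μ t ^ ((k : ℝ) / 2) := Real.rpow_pos_of_pos hμt _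
            rw [abs_mul, abs_of_pos hpowpos]
            have hb1 : |Λc k x y| ≤ M := hM k hk1 x y hx
            have hb2 : μ t ^ ((k : ℝ) / 2) ≤ μ t ^ ((n : ℝ)) :=
              Real.rpow_le_rpow_of_exponent_ge hμt hμ1 hexp
            rw [← hun]
            have h9 := abs_nonneg (Λc k x y)
            nlinarith only [hb1, hb2, hpowpos, hM0, h9]
        _ ≤ ((N : ℝ) + 1) * M * (μ t ^ e0 * μ t ^ (1/2 : ℝ)) := by
            rw [Finset.sum_const, nsmul_eq_mul]
            have hcard : (((Finset.Icc (2 * n - 1) N).erase (2 * n - 1)).card : ℝ) ≤ (N : ℝ) + 1 := by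
              have h1 : ((Finset.Icc (2 * n - 1) N).erase (2 * n - 1)).card ≤ N + 1 := by
                calc ((Finset.Icc (2 * n - 1) N).erase (2 * n - 1)).card
                    ≤ (Finset.Icc (2 * n - 1) N).card := Finset.card_erase_le
                  _ = N + 1 - (2 * n - 1) := Nat.card_Icc _ _
                  _ ≤ N + 1 := by omega
              exact_mod_cast h1
            have hMP : 0 ≤ M * (μ t ^ e0 * μ t ^ (1/2 : ℝ)) := by positivity
            nlinarith only [hcard, hMP]
    -- bound on the ℓ-term
    have hμm : 0 < μ t ^ m := pow_pos hμt m
    have hLb : |deriv μ t / μ t| ≤ (|χm| + 1) * (μ t ^ e0 * μ t ^ (1/2 : ℝ)) := by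
      have h1 : |deriv μ t / μ t| ≤ (|χm| + 1) * μ t ^ m := by
        have h2 := hT2 t htT2
        have h3 : deriv μ t / μ t = (deriv μ t / μ t / μ t ^ m) * μ t ^ m := by
          field_simp
        rw [h3, abs_mul, abs_of_pos hμm]
        nlinarith only [h2, hμm, abs_nonneg (deriv μ t / μ t / μ t ^ m)]
      have h4 : (μ t) ^ m = μ t ^ ((m : ℝ)) := (Real.rpow_natCast _ m).symm
      have h5 : μ t ^ ((m : ℝ)) ≤ μ t ^ ((n : ℝ)) := by
        apply Real.rpow_le_rpow_of_exponent_ge hμt hμ1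
        exact_mod_cast hnm
      rw [h4] at h1
      rw [← hun]
      nlinarith only [h1, h5, abs_nonneg χm, abs_nonneg (deriv μ t / μ t)]
    -- bound on the remainder
    have hRb : |Λtil x y t| ≤ C * (μ t ^ e0 * μ t ^ (1/2 : ℝ)) := by
      have h1 := (hΛt t htT x y hx).1
      have h2 : μ t ^ (((N : ℝ) + 1) / 2) ≤ μ t ^ ((n : ℝ)) := by
        apply Real.rpow_le_rpow_of_exponent_ge hμt hμ1
        have : ((2 * n - 1 : ℕ) : ℝ) ≤ (N : ℝ) := by exact_mod_cast hN1
        rw [hcast] at this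
        linarith only [this]
      rw [← hun]
      nlinarith only [h1, h2, hC, abs_nonneg (Λtil x y t)]
    -- final combination
    have h12 : μ t ^ (1/2 : ℝ) ≤ lb / (2 * C₂) := by
      have h1 : μ t ^ (1/2 : ℝ) = Real.sqrt (μ t) := (Real.sqrt_eq_rpow _).symm
      rw [h1]
      calc Real.sqrt (μ t) ≤ Real.sqrt ((lb / (2 * C₂)) ^ 2) := Real.sqrt_le_sqrt hμδ2
        _ = lb / (2 * C₂) := Real.sqrt_sq (by positivity)
    have hC₂b : C₂ * μ t ^ (1/2 : ℝ) ≤ lb / 2 := by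
      have := mul_le_mul_of_nonneg_left h12 hC₂pos.le
      calc C₂ * μ t ^ (1/2 : ℝ) ≤ C₂ * (lb / (2 * C₂)) := this
        _ = lb / 2 := by field_simp
    rw [hΛ, hsplit]
    have hE : σ * (lam y * μ t ^ e0
          + (∑ k ∈ (Finset.Icc (2 * n - 1) N).erase (2 * n - 1), Λc k x y * μ t ^ ((k : ℝ) / 2))
          - deriv μ t / μ t * x / 2 + Λtil x y t)
        = σ * lam y * μ t ^ e0
          + σ * ((∑ k ∈ (Finset.Icc (2 * n - 1) N).erase (2 * n - 1), Λc k x y * μ t ^ ((k : ℝ) / 2))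
            - deriv μ t / μ t * x / 2 + Λtil x y t) := by ring
    have hlamlb : lb * μ t ^ e0 ≤ σ * lam y * μ t ^ e0 :=
      mul_le_mul_of_nonneg_right (hlb y) hP.le
    obtain ⟨Z, hZ⟩ : ∃ z : ℝ, z = (∑ k ∈ (Finset.Icc (2 * n - 1) N).erase (2 * n - 1),
        Λc k x y * μ t ^ ((k : ℝ) / 2))
        - deriv μ t / μ t * x / 2 + Λtil x y t := ⟨_, rfl⟩
    rw [← hZ] at hE
    rw [hE]
    have hZabs : |Z| ≤ C₂ * (μ t ^ e0 * μ t ^ (1/2 : ℝ)) := by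
      have hℓx : |deriv μ t / μ t * x / 2| ≤ B * (|χm| + 1) / 2 * (μ t ^ e0 * μ t ^ (1/2 : ℝ)) := by
        rw [abs_div, abs_mul]
        have : |deriv μ t / μ t| * |x| ≤ ((|χm| + 1) * (μ t ^ e0 * μ t ^ (1/2 : ℝ))) * B := by
          apply mul_le_mul hLb hx (abs_nonneg x) (by positivity)
        rw [abs_of_pos (show (0:ℝ) < 2 by norm_num)]
        linarith only [this]
      calc |Z| ≤ |∑ k ∈ (Finset.Icc (2 * n - 1) N).erase (2 * n - 1), Λc k x y * μ t ^ ((k : ℝ) / 2)|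
          + |deriv μ t / μ t * x / 2| + |Λtil x y t| := by
            rw [hZ]
            exact (abs_add_le _ _).trans (by gcongr; exact abs_sub _ _)
        _ ≤ C₂ * (μ t ^ e0 * μ t ^ (1/2 : ℝ)) := by
            rw [hC₂]
            linarith only [hS, hℓx, hRb]
    have hσZ : -(C₂ * (μ t ^ e0 * μ t ^ (1/2 : ℝ))) ≤ σ * Z := by
      have h1 : |σ * Z| = |Z| := by rw [abs_mul, hσabs, one_mul]
      have h9 := neg_abs_le (σ * Z)
      rw [h1] at h9
      linarith only [h9, hZabs]
    have hfin : C₂ * (μ t ^ e0 * μ t ^ (1/2 : ℝ)) ≤ lb / 2 * μ t ^ e0 := by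
      have h9 : C₂ * μ t ^ (1/2 : ℝ) * μ t ^ e0 ≤ (lb / 2) * μ t ^ e0 :=
        mul_le_mul_of_nonneg_right hC₂b hP.le
      linarith only [h9]
    linarith only [hlamlb, hσZ, hfin]
  obtain ⟨t₁, ht₁, hkey⟩ := key
  have ht₁t₀ : t₀ ≤ t₁ := by linarith
  refine ⟨t₁, ht₁t₀, fun ρf ψf hode hstart => ?_⟩
  -- positivity of μ on [t₁, ∞)
  have hμpos' : ∀ t, t₁ ≤ t → 0 < μ t := fun t ht => hμpos t (by linarith)
  have hrpos : ∀ t, t₁ ≤ t → 0 < lb / 2 * μ t ^ e0 := fun t ht => by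
    have := hμpos' t ht
    positivity
  -- start point facts
  rw [hDint] at hstart
  have hstart1 : -c - K < ρf t₁ ∧ ρf t₁ < -c + K := ⟨hstart.1.1, hstart.1.2⟩
  have hK0 : 0 < K := by linarith [hstart1.1, hstart1.2]
  -- derivative of σ·ρ
  have hdrv : ∀ t, t₁ ≤ t → HasDerivAt (fun τ => σ * ρf τ) (σ * Λ (ρf t) (ψf t) t) t :=
    fun t ht => ((hode t ht).1).const_mul σ
  -- strict monotonicity of σ·ρ on intervals staying in D
  have hmono : ∀ t : ℝ, (∀ τ ∈ Icc t₁ t, (ρf τ, ψf τ) ∈ D) →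
      StrictMonoOn (fun τ => σ * ρf τ) (Icc t₁ t) := by
    intro t hstay
    apply strictMonoOn_of_deriv_pos (convex_Icc t₁ t)
    · intro τ hτ
      exact ((hdrv τ hτ.1).continuousAt).continuousWithinAt
    · intro τ hτ
      rw [interior_Icc] at hτ
      rw [(hdrv τ hτ.1.le).deriv]
      have hxB : |ρf τ| ≤ B := hmemBD _ (hstay τ ⟨hτ.1.le, hτ.2.le⟩)
      exact lt_of_lt_of_le (hrpos τ hτ.1.le) (hkey τ hτ.1.le _ _ hxB)
  constructor
  · -- part 1: |ρ s − ρ t₁| strictly increasing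
    intro s t hs hst hstay
    have hsm := hmono t hstay
    have hts : t₁ ≤ t := le_trans hs hst.le
    have h1 : σ * ρf t₁ ≤ σ * ρf s :=
      hsm.monotoneOn ⟨le_rfl, hts⟩ ⟨hs, hst.le⟩ hs
    have h2 : σ * ρf s < σ * ρf t :=
      hsm ⟨hs, hst.le⟩ ⟨hts, le_rfl⟩ hst
    have e1 : |ρf s - ρf t₁| = σ * ρf s - σ * ρf t₁ := by
      have : |ρf s - ρf t₁| = |σ * (ρf s - ρf t₁)| := by
        rw [abs_mul, hσabs, one_mul]
      rw [this, mul_sub, abs_of_nonneg (by linarith)]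
    have e2 : |ρf t - ρf t₁| = σ * ρf t - σ * ρf t₁ := by
      have : |ρf t - ρf t₁| = |σ * (ρf t - ρf t₁)| := by
        rw [abs_mul, hσabs, one_mul]
      rw [this, mul_sub, abs_of_nonneg (by linarith)]
    rw [e1, e2]; linarith
  · -- part 2: reaching the frontier
    by_cases hforever : ∀ τ, t₁ ≤ τ → (ρf τ, ψf τ) ∈ D
    · exfalso
      have he0pos : 0 < e0 := by
        have : (1:ℝ) ≤ (n:ℝ) := by exact_mod_cast hn
        rw [he0]; linarith
      have hcontOn : ContinuousOn (fun ς => μ ς ^ e0) (Ici t₀) :=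
        hμsmooth.continuousOn.rpow_const (fun x hx => Or.inl (ne_of_gt (hμpos x hx)))
      have hint : ∀ τ, t₁ ≤ τ → HasDerivAt (fun u => ∫ ς in t₀..u, μ ς ^ e0) (μ τ ^ e0) τ := by
        intro τ hτ
        have hτ0 : t₀ < τ := by linarith
        apply intervalIntegral.integral_hasDerivAt_right
        · apply ContinuousOn.intervalIntegrable
          apply hcontOn.mono
          rw [uIcc_of_le (le_of_lt hτ0)]
          exact Icc_subset_Ici_self
        · exact ContinuousOn.stronglyMeasurableAtFilter isOpen_Ioi
            (hcontOn.mono Ioi_subset_Ici_self) τ hτ0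
        · exact hcontOn.continuousAt (Ici_mem_nhds hτ0)
      obtain ⟨G, hG⟩ : ∃ g : ℝ → ℝ,
          g = fun τ => σ * ρf τ - lb / 2 * (∫ ς in t₀..τ, μ ς ^ e0) := ⟨_, rfl⟩
      have hGder : ∀ τ, t₁ ≤ τ →
          HasDerivAt G (σ * Λ (ρf τ) (ψf τ) τ - lb / 2 * (μ τ ^ e0)) τ := by
        intro τ hτ; rw [hG]
        exact (hdrv τ hτ).sub ((hint τ hτ).const_mul (lb / 2))
      have hGmono : MonotoneOn G (Ici t₁) := by
        apply monotoneOn_of_deriv_nonneg (convex_Ici t₁)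
        · exact fun τ hτ => (hGder τ hτ).continuousAt.continuousWithinAt
        · intro τ hτ
          rw [interior_Ici] at hτ
          exact (hGder τ (le_of_lt hτ)).differentiableAt.differentiableWithinAt
        · intro τ hτ
          rw [interior_Ici] at hτ
          rw [(hGder τ (le_of_lt hτ)).deriv]
          have hxB := hmemBD _ (hforever τ (le_of_lt hτ))
          have := hkey τ (le_of_lt hτ) (ρf τ) (ψf τ) hxB
          linarith
      have hbig : ∀ᶠ T' in atTop,
          (∫ ς in t₀..t₁, μ ς ^ e0) + (8 * B + 2) / lb ≤ (∫ ς in t₀..T', μ ς ^ e0) :=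
        hζ.eventually_ge_atTop _
      obtain ⟨T', hT'big, hT'2⟩ := (hbig.and (eventually_ge_atTop t₁)).exists
      have h1 : σ * ρf t₁ - lb / 2 * (∫ ς in t₀..t₁, μ ς ^ e0)
          ≤ σ * ρf T' - lb / 2 * (∫ ς in t₀..T', μ ς ^ e0) := by
        have := hGmono (mem_Ici.mpr le_rfl) (mem_Ici.mpr hT'2) hT'2
        rw [hG] at this
        simpa using this
      have h2 : σ * ρf T' ≤ B := by
        have hab : |σ * ρf T'| = |ρf T'| := by rw [abs_mul, hσabs, one_mul]
        have hb := hmemBD _ (hforever T' hT'2)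
        have := le_abs_self (σ * ρf T')
        linarith
      have h3 : -B ≤ σ * ρf t₁ := by
        have hab : |σ * ρf t₁| = |ρf t₁| := by rw [abs_mul, hσabs, one_mul]
        have hb := hmemBD _ (hforever t₁ le_rfl)
        have := neg_abs_le (σ * ρf t₁)
        linarith
      have h4 : lb / 2 * ((8 * B + 2) / lb) = 4 * B + 1 := by
        field_simp; ring
      have h5 : lb / 2 * ((8 * B + 2) / lb)
          ≤ lb / 2 * ((∫ ς in t₀..T', μ ς ^ e0) - (∫ ς in t₀..t₁, μ ς ^ e0)) := by
        apply mul_le_mul_of_nonneg_left _ (by linarith only [hlb0])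
        linarith only [hT'big]
      linarith only [h1, h2, h3, h4, h5, hB]

    · push_neg at hforever
      obtain ⟨τ', hτ'1, hτ'2⟩ := hforever
      -- the function |ρ + c| crosses the level K
      have hgc : ContinuousOn (fun τ => |ρf τ + c|) (Icc t₁ τ') := by
        intro τ hτ
        exact (((hode τ hτ.1).1.continuousAt.add continuousAt_const).abs).continuousWithinAt
      have hgt₁ : |ρf t₁ + c| < K := abs_lt.mpr ⟨by linarith [hstart1.1], by linarith [hstart1.2]⟩
      have hgτ' : K < |ρf τ' + c| := by
        rw [hDeq] at hτ'2
        simp only [Set.mem_prod, Set.mem_Icc, Set.mem_univ, and_true, not_and, not_le] at hτ'2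
        rw [lt_abs]
        by_cases h : -c - K ≤ ρf τ'
        · left; linarith [hτ'2 h]
        · right; push_neg at h; linarith
      have htt : t₁ ≤ τ' := hτ'1
      have hiv := intermediate_value_Icc htt hgc
      have hKmem : K ∈ Icc (|ρf t₁ + c|) (|ρf τ' + c|) := ⟨hgt₁.le, hgτ'.le⟩
      obtain ⟨te, hte, hteK0⟩ := hiv hKmem
      have hteK : |ρf te + c| = K := hteK0
      have hnet : te ≠ t₁ := by
        intro h; rw [h] at hteK; rw [hteK] at hgt₁; exact lt_irrefl K hgt₁
      refine ⟨te, lt_of_le_of_ne hte.1 (Ne.symm hnet), ?_⟩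
      rw [hDclosed.frontier_eq]
      constructor
      · rw [hDeq]
        have := abs_le.mp hteK.le
        exact ⟨⟨by linarith [this.1], by linarith [this.2]⟩, Set.mem_univ _⟩
      · rw [hDint]
        rintro ⟨h1, -⟩
        have : |ρf te + c| < K := abs_lt.mpr ⟨by linarith [h1.1], by linarith [h1.2]⟩
        rw [hteK] at this; exact lt_irrefl K this
end

section
/- Let t_ε ∈ ℝ, ε₁ > 0, V₋, V₊ > 0 and δ ≥ 0 with δ < ε₁ √(V₋/V₊). Let y: [t_ε, ∞) → ℝ² be continuous and V: ℝ² × [t_ε, ∞) → ℝ be such that (a) V₋ |w|² ≤ V(w, t) ≤ V₊ |w|² for all t ≥ t_ε and all w ∈ ℝ² with |w| ≤ ε₁, and (b) the function t ↦ V(y(t), t) is continuous and is nonincreasing on every interval on which δ ≤ |y(t)| ≤ ε₁. If |y(t_ε)| ≤ δ, then |y(t)| < ε₁ for all t ≥ t_ε. -/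
/-!
If the trajectory ever reached the sphere `‖y‖ = ε₁`, let `t₁` be the first such time and `t₀` the
last time before `t₁` with `‖y‖ = δ` (the sandwich forces `V₋ ≤ V₊`, so `δ < ε₁`). On `[t₀, t₁]`
the trajectory stays in the annulus, so
`V₋ ε₁² ≤ V(y t₁, t₁) ≤ V(y t₀, t₀) ≤ V₊ δ² < V₋ ε₁²`, where the last step is `δ < ε₁ √(V₋/V₊)`.
-/

open Real Set

section Crossing

variable {α β : Type*} [ConditionallyCompleteLinearOrder α] [TopologicalSpace α] [OrderTopology α]
  [DenselyOrdered α] [LinearOrder β] [TopologicalSpace β] [OrderClosedTopology β]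
  {g : α → β} {a b : α} {c : β}

/-- The least point of the compact set `{g ≥ c}` is itself a level-`c` point by the intermediate
value theorem, hence the first time `g` reaches `c`. -/
theorem exists_eq_forall_le_of_continuousOn_Icc (hab : a ≤ b) (hg : ContinuousOn g (Icc a b))
    (ha : g a ≤ c) (hb : c ≤ g b) :
    ∃ t ∈ Icc a b, g t = c ∧ ∀ s ∈ Icc a t, g s ≤ c := by
  have hclosed : IsClosed (Icc a b ∩ g ⁻¹' Ici c) :=
    hg.preimage_isClosed_of_isClosed isClosed_Icc isClosed_Ici
  obtain ⟨t₁, ⟨ht₁, hct₁⟩, hleast⟩ :=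
    (isCompact_Icc.of_isClosed_subset hclosed inter_subset_left).exists_isLeast
      ⟨b, right_mem_Icc.2 hab, hb⟩
  obtain ⟨t, ht, hgt⟩ := intermediate_value_Icc ht₁.1 (hg.mono (Icc_subset_Icc_right ht₁.2))
    ⟨ha, hct₁⟩
  have heq_of_le {s : α} (hs : s ∈ Icc a t) (hcs : c ≤ g s) : s = t :=
    le_antisymm hs.2 ((hleast ⟨⟨hs.1, hs.2.trans (ht.2.trans ht₁.2)⟩, hcs⟩).trans' ht.2)
  refine ⟨t, ⟨ht.1, ht.2.trans ht₁.2⟩, hgt, fun s hs => le_of_not_gt fun hcs => ?_⟩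
  rw [heq_of_le hs hcs.le, hgt] at hcs
  exact lt_irrefl c hcs

theorem exists_eq_forall_ge_of_continuousOn_Icc (hab : a ≤ b) (hg : ContinuousOn g (Icc a b))
    (ha : g a ≤ c) (hb : c ≤ g b) :
    ∃ t ∈ Icc a b, g t = c ∧ ∀ s ∈ Icc t b, c ≤ g s := by
  obtain ⟨t, ht, hgt, hle⟩ := exists_eq_forall_le_of_continuousOn_Icc (α := αᵒᵈ) (β := βᵒᵈ)
    (g := g) (a := b) (b := a) (c := c) hab (hg.mono fun _ hs => ⟨hs.2, hs.1⟩) hb ha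
  exact ⟨t, ⟨ht.2, ht.1⟩, hgt, fun s hs => hle s ⟨hs.2, hs.1⟩⟩

theorem exists_crossing_of_continuousOn_Icc {δ ε : β} (hab : a ≤ b)
    (hg : ContinuousOn g (Icc a b)) (ha : g a ≤ δ) (hδε : δ ≤ ε) (hb : ε ≤ g b) :
    ∃ t₀ t₁, a ≤ t₀ ∧ t₀ ≤ t₁ ∧ g t₀ = δ ∧ g t₁ = ε ∧ ∀ s ∈ Icc t₀ t₁, δ ≤ g s ∧ g s ≤ ε := by
  obtain ⟨t₁, ht₁, hgt₁, hle⟩ := exists_eq_forall_le_of_continuousOn_Icc hab hg (ha.trans hδε) hb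
  obtain ⟨t₀, ht₀, hgt₀, hge⟩ := exists_eq_forall_ge_of_continuousOn_Icc ht₁.1
    (hg.mono (Icc_subset_Icc_right ht₁.2)) ha (hδε.trans_eq hgt₁.symm)
  exact ⟨t₀, t₁, ht₀.1, ht₀.2, hgt₀, hgt₁, fun s hs =>
    ⟨hge s hs, hle s ⟨ht₀.1.trans hs.1, hs.2⟩⟩⟩

end Crossing

theorem mul_sq_lt_mul_sq_of_lt_mul_sqrt_div {δ ε p q : ℝ} (hp : 0 < p) (hq : 0 ≤ q) (hδ : 0 ≤ δ)
    (h : δ < ε * √(q / p)) : p * δ ^ 2 < q * ε ^ 2 := by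
  have hsq : δ ^ 2 < ε ^ 2 * (q / p) := by
    simpa [mul_pow, sq_sqrt (div_nonneg hq hp.le)] using pow_lt_pow_left₀ h hδ two_ne_zero
  calc p * δ ^ 2 < p * (ε ^ 2 * (q / p)) := mul_lt_mul_of_pos_left hsq hp
    _ = q * ε ^ 2 := by field_simp

theorem lyapunov_confinement_general
    (tε ε₁ Vm Vp δ : ℝ) (hε₁ : 0 < ε₁) (hVm : 0 < Vm) (hVp : 0 < Vp)
    (hδ0 : 0 ≤ δ) (hδ : δ < ε₁ * Real.sqrt (Vm / Vp))
    (y : ℝ → EuclideanSpace ℝ (Fin 2))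
    (V : EuclideanSpace ℝ (Fin 2) → ℝ → ℝ)
    (hy : ContinuousOn y (Ici tε))
    (hVbound : ∀ (w : EuclideanSpace ℝ (Fin 2)) (t : ℝ), tε ≤ t → ‖w‖ ≤ ε₁ →
      Vm * ‖w‖ ^ 2 ≤ V w t ∧ V w t ≤ Vp * ‖w‖ ^ 2)
    (hVdecr : ∀ a b : ℝ, tε ≤ a → a ≤ b →
      (∀ t ∈ Icc a b, δ ≤ ‖y t‖ ∧ ‖y t‖ ≤ ε₁) →
      AntitoneOn (fun t => V (y t) t) (Icc a b))
    (hinit : ‖y tε‖ ≤ δ) :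
    ∀ t, tε ≤ t → ‖y t‖ < ε₁ := by
  have hVm_le_Vp : Vm ≤ Vp := by
    have hw := hVbound (EuclideanSpace.single 0 ε₁) tε le_rfl (by simp [abs_of_pos hε₁])
    exact le_of_mul_le_mul_right (hw.1.trans hw.2) (by simpa using pow_pos hε₁ 2)
  have hδε₁ : δ < ε₁ := hδ.trans_le <| mul_le_of_le_one_right hε₁.le <|
    sqrt_le_one.2 ((div_le_one hVp).2 hVm_le_Vp)
  have hgap := mul_sq_lt_mul_sq_of_lt_mul_sqrt_div hVp hVm.le hδ0 hδ
  intro T hT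
  by_contra! hexit
  obtain ⟨t₀, t₁, ht₀, ht₀₁, hyt₀, hyt₁, hband⟩ := exists_crossing_of_continuousOn_Icc hT
    (hy.norm.mono Icc_subset_Ici_self) hinit hδε₁.le hexit
  have hVt₁ := (hVbound (y t₁) t₁ (ht₀.trans ht₀₁) hyt₁.le).1
  have hVt₀ := (hVbound (y t₀) t₀ ht₀ (hyt₀.trans_le hδε₁.le)).2
  rw [hyt₁] at hVt₁
  rw [hyt₀] at hVt₀
  refine lt_irrefl (Vm * ε₁ ^ 2) ?_
  calc Vm * ε₁ ^ 2 ≤ V (y t₁) t₁ := hVt₁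
    _ ≤ V (y t₀) t₀ :=
      hVdecr t₀ t₁ ht₀ ht₀₁ hband (left_mem_Icc.2 ht₀₁) (right_mem_Icc.2 ht₀₁) ht₀₁
    _ ≤ Vp * δ ^ 2 := hVt₀
    _ < Vm * ε₁ ^ 2 := hgap

/-- Deterministic Lyapunov confinement: a trajectory starting in the ball of radius `δ`
cannot leave the ball of radius `ε₁` if the Lyapunov function `V`, sandwiched between
`V₋‖w‖²` and `V₊‖w‖²`, is nonincreasing along the trajectory on the annulus
`δ ≤ ‖y(t)‖ ≤ ε₁`, provided `δ < ε₁ √(V₋/V₊)`. -/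
theorem lyapunov_confinement
    (tε ε₁ Vm Vp δ : ℝ) (hε₁ : 0 < ε₁) (hVm : 0 < Vm) (hVp : 0 < Vp)
    (hδ0 : 0 ≤ δ) (hδ : δ < ε₁ * Real.sqrt (Vm / Vp))
    (y : ℝ → EuclideanSpace ℝ (Fin 2))
    (V : EuclideanSpace ℝ (Fin 2) → ℝ → ℝ)
    (hy : ContinuousOn y (Ici tε))
    (hVbound : ∀ (w : EuclideanSpace ℝ (Fin 2)) (t : ℝ), tε ≤ t → ‖w‖ ≤ ε₁ →
      Vm * ‖w‖ ^ 2 ≤ V w t ∧ V w t ≤ Vp * ‖w‖ ^ 2)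
    (hVcont : ContinuousOn (fun t => V (y t) t) (Ici tε))
    (hVdecr : ∀ a b : ℝ, tε ≤ a → a ≤ b →
      (∀ t ∈ Icc a b, δ ≤ ‖y t‖ ∧ ‖y t‖ ≤ ε₁) →
      AntitoneOn (fun t => V (y t) t) (Icc a b))
    (hinit : ‖y tε‖ ≤ δ) :
    ∀ t, tε ≤ t → ‖y t‖ < ε₁ :=
  lyapunov_confinement_general tε ε₁ Vm Vp δ hε₁ hVm hVp hδ0 hδ y V hy hVbound hVdecr hinit
end
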